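/- arXiv:1906.05598 — 2 statements merged into one kernel-verified Lean document; each statement's English description precedes it below -/
import Mathlib

section
/- Let P be a set of 2n points in regular wheel configuration, n ≥ 2. If T is a plane spanning tree on P with exactly one boundary edge, then T contains at least n radial edges, and these radial edges go to consecutive points on the circle. -/
open scoped Real

namespace WheelCfg

/-- Vertex type of the wheel on `2n` points: `none` is the center,
`some i` is the `i`-th of the `2n-1` regularly spaced circle points. -/
abbrev WV (n : ℕ) := Option (Fin (2*n-1))

/-- Positions of the points of a regular wheel configuration with center `c`,
radius `R` and initial angle `θ`. -/
noncomputable def wpos (n : ℕ) (c : ℝ × ℝ) (R θ : ℝ) : WV n → ℝ × ℝ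
  | none => c
  | some i => (c.1 + R * Real.cos (θ + 2*π*i.val/(2*n-1)),
               c.2 + R * Real.sin (θ + 2*π*i.val/(2*n-1)))

/-- A radial edge: one endpoint is the center. -/
def Radial {n : ℕ} : WV n → WV n → Prop
  | none, _ => True
  | _, none => True
  | some _, some _ => False

/-- A boundary edge: joins two cyclically consecutive circle points. -/
def Boundary {n : ℕ} : WV n → WV n → Prop
  | some i, some j => (i.val + 1) % (2*n-1) = j.val ∨ (j.val + 1) % (2*n-1) = i.val
  | _, _ => False

/-- Non-crossing: distinct edges have disjoint open segments. -/
def NonCrossing {n : ℕ} (pos : WV n → ℝ × ℝ) (T : SimpleGraph (WV n)) : Prop :=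
  ∀ a b c d : WV n, T.Adj a b → T.Adj c d → s(a,b) ≠ s(c,d) →
    Disjoint (openSegment ℝ (pos a) (pos b)) (openSegment ℝ (pos c) (pos d))

/-- A plane spanning tree of the wheel configuration. -/
def PlaneSpanningTree {n : ℕ} (pos : WV n → ℝ × ℝ) (T : SimpleGraph (WV n)) : Prop :=
  T.IsTree ∧ NonCrossing pos T

/-- A partition of the edge set of the complete geometric graph into `n` graphs. -/
def IsPartition {n : ℕ} (T : Fin n → SimpleGraph (WV n)) : Prop :=
  ∀ a b : WV n, a ≠ b → ∃! i : Fin n, (T i).Adj a b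

/-- The cyclic successor of a circle point. -/
def nxt {m : ℕ} (k : Fin m) : Fin m := ⟨(k.val + 1) % m, Nat.mod_lt _ k.pos⟩

/-- The number of boundary edges of `T`. -/
noncomputable def boundaryCount {n : ℕ} (T : SimpleGraph (WV n)) : ℕ :=
  Set.ncard {k : Fin (2*n-1) | T.Adj (some k) (some (nxt k))}

/-- The number of radial edges of `T`. -/
noncomputable def radialCount {n : ℕ} (T : SimpleGraph (WV n)) : ℕ :=
  Set.ncard {k : Fin (2*n-1) | T.Adj none (some k)}

/-- The circle point with index `k` (mod `2n-1`). -/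
def cir (n : ℕ) (h : 0 < 2*n-1) (k : ℕ) : WV n := some ⟨k % (2*n-1), Nat.mod_lt _ h⟩

/-- Signed side of point `p` with respect to the oriented line through `u`, `v`. -/
def sideVal (u v p : ℝ × ℝ) : ℝ :=
  (v.1 - u.1) * (p.2 - u.2) - (v.2 - u.2) * (p.1 - u.1)

end WheelCfg

namespace WheelCfg
open Real

lemma sideVal_affine (A B u v : ℝ × ℝ) (t : ℝ) :
    sideVal A B (u.1 + t * (v.1 - u.1), u.2 + t * (v.2 - u.2))
      = sideVal A B u + t * (sideVal A B v - sideVal A B u) := by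
  simp only [sideVal]; ring

lemma cross_base {A B U V : ℝ×ℝ} (h1 : sideVal A B U < 0) (h2 : 0 < sideVal A B V)
    (h3 : 0 < sideVal U V A) (h4 : sideVal U V B < 0) :
    ¬ Disjoint (openSegment ℝ A B) (openSegment ℝ U V) := by
  have hden : sideVal A B U - sideVal A B V < 0 := by linarith
  have hdenne : sideVal A B U - sideVal A B V ≠ 0 := ne_of_lt hden
  obtain ⟨t, ht⟩ : ∃ t : ℝ, t = sideVal A B U / (sideVal A B U - sideVal A B V) := ⟨_, rfl⟩
  have ht0 : 0 < t := ht ▸ div_pos_of_neg_of_neg h1 hden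
  have ht1 : t < 1 := by rw [ht, div_lt_one_of_neg hden]; linarith
  obtain ⟨q, hquv, hFq, hGq⟩ : ∃ q : ℝ × ℝ, q ∈ openSegment ℝ U V ∧ sideVal A B q = 0 ∧
      sideVal U V q = 0 := by
    refine ⟨(U.1 + t * (V.1 - U.1), U.2 + t * (V.2 - U.2)), ?_, ?_, ?_⟩
    · rw [openSegment_eq_image]
      exact ⟨t, ⟨ht0, ht1⟩, by simp [Prod.ext_iff]; constructor <;> ring⟩
    · rw [sideVal_affine, ht]; field_simp; ring
    · simp only [sideVal]; ring
  clear ht ht0 ht1 hden hdenne t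
  have hnorm : 0 < (B.1 - A.1)^2 + (B.2 - A.2)^2 := by
    rcases eq_or_ne (B.1 - A.1) 0 with h | h
    · rcases eq_or_ne (B.2 - A.2) 0 with h2' | h2'
      · exfalso
        have : sideVal A B U = 0 := by simp [sideVal, h, h2']
        linarith
      · positivity
    · positivity
  obtain ⟨s, hs⟩ : ∃ s : ℝ, s = ((q.1 - A.1) * (B.1 - A.1) + (q.2 - A.2) * (B.2 - A.2)) /
      ((B.1 - A.1)^2 + (B.2 - A.2)^2) := ⟨_, rfl⟩
  have hnormne : (B.1 - A.1)^2 + (B.2 - A.2)^2 ≠ 0 := ne_of_gt hnorm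
  have hq1 : q.1 = A.1 + s * (B.1 - A.1) := by
    rw [hs]; field_simp
    simp only [sideVal] at hFq
    linear_combination (-(B.2 - A.2)) * hFq
  have hq2 : q.2 = A.2 + s * (B.2 - A.2) := by
    rw [hs]; field_simp
    simp only [sideVal] at hFq
    linear_combination (B.1 - A.1) * hFq
  have hGaff : sideVal U V q = sideVal U V A + s * (sideVal U V B - sideVal U V A) := by
    simp only [sideVal, hq1, hq2]; ring
  have hs0 : 0 < s := by nlinarith [hGaff, hGq]
  have hs1 : s < 1 := by nlinarith [hGaff, hGq]
  have hqAB : q ∈ openSegment ℝ A B := by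
    rw [openSegment_eq_image]
    refine ⟨s, ⟨hs0, hs1⟩, ?_⟩
    simp only [smul_eq_mul, Prod.ext_iff]
    constructor
    · simp only [Prod.fst_add, Prod.smul_fst, smul_eq_mul]
      rw [hq1]; ring
    · simp only [Prod.snd_add, Prod.smul_snd, smul_eq_mul]
      rw [hq2]; ring
  rw [Set.not_disjoint_iff]
  exact ⟨q, hqAB, hquv⟩

noncomputable def qp (c : ℝ × ℝ) (R α : ℝ) : ℝ × ℝ := (c.1 + R * cos α, c.2 + R * sin α)

lemma sin_id (u v : ℝ) : sin (2*u) + sin (2*v) - sin (2*u + 2*v)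
    = 4 * sin u * sin v * sin (u+v) := by
  rw [sin_add (2*u) (2*v), sin_two_mul, sin_two_mul, cos_two_mul, cos_two_mul, sin_add]
  linear_combination (-4*sin u*cos u) * sin_sq_add_cos_sq v + (-4*sin v*cos v) * sin_sq_add_cos_sq u

lemma sv_qqq (c : ℝ × ℝ) (R a b g : ℝ) :
    sideVal (qp c R a) (qp c R b) (qp c R g)
      = 4*R^2 * (sin ((b-a)/2) * sin ((g-b)/2) * sin ((g-a)/2)) := by
  have key : sideVal (qp c R a) (qp c R b) (qp c R g)
      = R^2 * (sin (g-b) + sin (b-a) + sin (a-g)) := by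
    simp only [sideVal, qp]
    rw [sin_sub, sin_sub, sin_sub]; ring
  have this1 := sin_id ((b-a)/2) ((g-b)/2)
  rw [show 2*((b-a)/2) = b - a by ring, show 2*((g-b)/2) = g - b by ring] at this1
  rw [show (b-a) + (g-b) = g - a by ring, show (b-a)/2 + (g-b)/2 = (g-a)/2 by ring] at this1
  have h4 : sin (a - g) = -sin (g - a) := by rw [show a - g = -(g-a) by ring, sin_neg]
  rw [key]
  linear_combination R^2 * this1 + R^2 * h4

lemma sv_qqc (c : ℝ × ℝ) (R a b : ℝ) :
    sideVal (qp c R a) (qp c R b) c = R^2 * sin (b - a) := by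
  simp only [sideVal, qp]; rw [sin_sub]; ring

lemma sv_qcq (c : ℝ × ℝ) (R a g : ℝ) :
    sideVal (qp c R a) c (qp c R g) = R^2 * sin (a - g) := by
  simp only [sideVal, qp]; rw [sin_sub]; ring

end WheelCfg

namespace WheelCfg
open Real

noncomputable def pt (n : ℕ) (c : ℝ × ℝ) (R θ : ℝ) (k : ℕ) : ℝ × ℝ :=
  qp c R (θ + 2*π*(k:ℝ)/(2*(n:ℝ)-1))

variable {n : ℕ}

lemma Ncast (hn : 2 ≤ n) : ((2*n-1 : ℕ) : ℝ) = 2*(n:ℝ)-1 := by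
  have : (1:ℕ) ≤ 2*n := by omega
  push_cast [Nat.cast_sub this]; ring

lemma Nrpos (hn : 2 ≤ n) : (0:ℝ) < 2*(n:ℝ)-1 := by
  have : (2:ℝ) ≤ n := by exact_mod_cast hn
  linarith

lemma wpos_cir (hn : 2 ≤ n) (c : ℝ × ℝ) (R θ : ℝ) (h : 0 < 2*n-1) (k : ℕ) :
    wpos n c R θ (cir n h k) = pt n c R θ k := by
  have hNr := Nrpos hn
  have hNrne : (2*(n:ℝ)-1) ≠ 0 := ne_of_gt hNr
  have hang : θ + 2*π*(k:ℝ)/(2*(n:ℝ)-1)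
      = (θ + 2*π*((k % (2*n-1) : ℕ):ℝ)/(2*(n:ℝ)-1)) + (k/(2*n-1) : ℕ)*(2*π) := by
    have hk : (k:ℝ) = ((k % (2*n-1) : ℕ):ℝ) + ((k / (2*n-1) : ℕ):ℝ) * (2*(n:ℝ)-1) := by
      rw [← Ncast hn]
      exact_mod_cast (Nat.mod_add_div' k (2*n-1)).symm
    rw [hk]; field_simp; ring
  show _ = qp c R _
  rw [hang]
  simp [wpos, cir, qp, cos_add_nat_mul_two_pi, sin_add_nat_mul_two_pi, Ncast hn]

lemma pt_mod (hn : 2 ≤ n) (c : ℝ × ℝ) (R θ : ℝ) {k l : ℕ} (h : k % (2*n-1) = l % (2*n-1)) :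
    pt n c R θ k = pt n c R θ l := by
  have h0 : 0 < 2*n-1 := by omega
  rw [← wpos_cir hn c R θ h0, ← wpos_cir hn c R θ h0]
  unfold cir
  simp [h]

lemma sv_ppp (hn : 2 ≤ n) (c : ℝ × ℝ) (R θ : ℝ) (x y z : ℕ) :
    sideVal (pt n c R θ x) (pt n c R θ y) (pt n c R θ z)
      = 4*R^2 * (sin (π*((y:ℝ)-x)/(2*(n:ℝ)-1)) * sin (π*((z:ℝ)-y)/(2*(n:ℝ)-1)) *
          sin (π*((z:ℝ)-x)/(2*(n:ℝ)-1))) := by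
  have hNrne : (2*(n:ℝ)-1) ≠ 0 := ne_of_gt (Nrpos hn)
  unfold pt
  rw [sv_qqq,
    show (θ + 2*π*(y:ℝ)/(2*(n:ℝ)-1) - (θ + 2*π*(x:ℝ)/(2*(n:ℝ)-1)))/2
        = π*((y:ℝ)-x)/(2*(n:ℝ)-1) by field_simp; ring,
    show (θ + 2*π*(z:ℝ)/(2*(n:ℝ)-1) - (θ + 2*π*(y:ℝ)/(2*(n:ℝ)-1)))/2
        = π*((z:ℝ)-y)/(2*(n:ℝ)-1) by field_simp; ring,
    show (θ + 2*π*(z:ℝ)/(2*(n:ℝ)-1) - (θ + 2*π*(x:ℝ)/(2*(n:ℝ)-1)))/2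
        = π*((z:ℝ)-x)/(2*(n:ℝ)-1) by field_simp; ring]

lemma sv_ppc (hn : 2 ≤ n) (c : ℝ × ℝ) (R θ : ℝ) (x y : ℕ) :
    sideVal (pt n c R θ x) (pt n c R θ y) c = R^2 * sin (2*π*((y:ℝ)-x)/(2*(n:ℝ)-1)) := by
  have hNrne : (2*(n:ℝ)-1) ≠ 0 := ne_of_gt (Nrpos hn)
  unfold pt
  rw [sv_qqc,
    show θ + 2*π*(y:ℝ)/(2*(n:ℝ)-1) - (θ + 2*π*(x:ℝ)/(2*(n:ℝ)-1))
        = 2*π*((y:ℝ)-x)/(2*(n:ℝ)-1) by field_simp; ring]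

lemma sv_pcp (hn : 2 ≤ n) (c : ℝ × ℝ) (R θ : ℝ) (x z : ℕ) :
    sideVal (pt n c R θ x) c (pt n c R θ z) = R^2 * sin (2*π*((x:ℝ)-z)/(2*(n:ℝ)-1)) := by
  have hNrne : (2*(n:ℝ)-1) ≠ 0 := ne_of_gt (Nrpos hn)
  unfold pt
  rw [sv_qcq,
    show θ + 2*π*(x:ℝ)/(2*(n:ℝ)-1) - (θ + 2*π*(z:ℝ)/(2*(n:ℝ)-1))
        = 2*π*((x:ℝ)-z)/(2*(n:ℝ)-1) by field_simp; ring]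

lemma spos (hn : 2 ≤ n) {x : ℝ} (h1 : 0 < x) (h2 : x < 2*(n:ℝ)-1) :
    0 < sin (π*x/(2*(n:ℝ)-1)) := by
  have hNr := Nrpos hn
  apply sin_pos_of_pos_of_lt_pi
  · positivity
  · rw [div_lt_iff₀ hNr] at *
    nlinarith [pi_pos]

lemma sneg (hn : 2 ≤ n) {x : ℝ} (h1 : x < 0) (h2 : -(2*(n:ℝ)-1) < x) :
    sin (π*x/(2*(n:ℝ)-1)) < 0 := by
  have : sin (π*x/(2*(n:ℝ)-1)) = - sin (π*(-x)/(2*(n:ℝ)-1)) := by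
    rw [show π*(-x)/(2*(n:ℝ)-1) = -(π*x/(2*(n:ℝ)-1)) by ring, sin_neg]; ring
  rw [this]
  simp only [neg_neg, neg_lt_zero]
  apply spos hn <;> linarith

lemma s2pos (hn : 2 ≤ n) {x : ℝ} (h1 : 0 < x) (h2 : 2*x < 2*(n:ℝ)-1) :
    0 < sin (2*π*x/(2*(n:ℝ)-1)) := by
  rw [show 2*π*x/(2*(n:ℝ)-1) = π*(2*x)/(2*(n:ℝ)-1) by ring]
  apply spos hn <;> linarith

lemma s2neg (hn : 2 ≤ n) {x : ℝ} (h1 : x < 0) (h2 : -(2*(n:ℝ)-1) < 2*x) :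
    sin (2*π*x/(2*(n:ℝ)-1)) < 0 := by
  rw [show 2*π*x/(2*(n:ℝ)-1) = π*(2*x)/(2*(n:ℝ)-1) by ring]
  apply sneg hn <;> linarith

/-- chord `(i, i+d)` crosses chord `(i+t, i+u)` when `0 < t < d < u < 2n-1`. -/
lemma GL2 (hn : 2 ≤ n) (c : ℝ × ℝ) (R θ : ℝ) (hR : 0 < R) {i t d u : ℕ}
    (h0t : 0 < t) (htd : t < d) (hdu : d < u) (huN : u < 2*n-1) :
    ¬ Disjoint (openSegment ℝ (pt n c R θ i) (pt n c R θ (i+d)))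
        (openSegment ℝ (pt n c R θ (i+t)) (pt n c R θ (i+u))) := by
  have hNr := Nrpos hn
  have hN : ((2*n-1 : ℕ):ℝ) = 2*(n:ℝ)-1 := Ncast hn
  have hucast : (u:ℝ) < 2*(n:ℝ)-1 := by rw [← hN]; exact_mod_cast huN
  have h0t' : (0:ℝ) < t := by exact_mod_cast h0t
  have htd' : (t:ℝ) < d := by exact_mod_cast htd
  have hdu' : (d:ℝ) < u := by exact_mod_cast hdu
  apply cross_base
  · rw [sv_ppp hn]
    push_cast
    have s1 : 0 < sin (π*((i:ℝ)+d-i)/(2*(n:ℝ)-1)) := by apply spos hn <;> linarith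
    have s2 : sin (π*((i:ℝ)+t-(i+d))/(2*(n:ℝ)-1)) < 0 := by apply sneg hn <;> linarith
    have s3 : 0 < sin (π*((i:ℝ)+t-i)/(2*(n:ℝ)-1)) := by apply spos hn <;> linarith
    exact mul_neg_of_pos_of_neg (by positivity)
      (mul_neg_of_neg_of_pos (mul_neg_of_pos_of_neg s1 s2) s3)
  · rw [sv_ppp hn]
    push_cast
    have s1 : 0 < sin (π*((i:ℝ)+d-i)/(2*(n:ℝ)-1)) := by apply spos hn <;> linarith
    have s2 : 0 < sin (π*((i:ℝ)+u-(i+d))/(2*(n:ℝ)-1)) := by apply spos hn <;> linarith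
    have s3 : 0 < sin (π*((i:ℝ)+u-i)/(2*(n:ℝ)-1)) := by apply spos hn <;> linarith
    positivity
  · rw [show pt n c R θ i = pt n c R θ (i + (2*n-1)) from
      pt_mod hn c R θ (Nat.add_mod_right i (2*n-1)).symm]
    rw [sv_ppp hn]
    push_cast [hN]
    have s1 : 0 < sin (π*((i:ℝ)+u-(i+t))/(2*(n:ℝ)-1)) := by apply spos hn <;> linarith
    have s2 : 0 < sin (π*((i:ℝ)+(2*(n:ℝ)-1)-(i+u))/(2*(n:ℝ)-1)) := by
      apply spos hn <;> linarith
    have s3 : 0 < sin (π*((i:ℝ)+(2*(n:ℝ)-1)-(i+t))/(2*(n:ℝ)-1)) := by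
      apply spos hn <;> linarith
    positivity
  · rw [sv_ppp hn]
    push_cast
    have s1 : 0 < sin (π*((i:ℝ)+u-(i+t))/(2*(n:ℝ)-1)) := by apply spos hn <;> linarith
    have s2 : sin (π*((i:ℝ)+d-(i+u))/(2*(n:ℝ)-1)) < 0 := by apply sneg hn <;> linarith
    have s3 : 0 < sin (π*((i:ℝ)+d-(i+t))/(2*(n:ℝ)-1)) := by apply spos hn <;> linarith
    exact mul_neg_of_pos_of_neg (by positivity)
      (mul_neg_of_neg_of_pos (mul_neg_of_pos_of_neg s1 s2) s3)

end WheelCfg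

namespace WheelCfg
open Real

variable {n : ℕ} {c : ℝ × ℝ} {R θ : ℝ} {T : SimpleGraph (WV n)}

/-- radial `(x, i+t)` crosses chord `(i, i+d)` when `0 < t < d`, `2d < 2n-1`. -/
lemma GL1 (hn : 2 ≤ n) (hR : 0 < R) {i t d : ℕ}
    (h0t : 0 < t) (htd : t < d) (hdN : 2*d < 2*n-1) :
    ¬ Disjoint (openSegment ℝ (pt n c R θ i) (pt n c R θ (i+d)))
        (openSegment ℝ (pt n c R θ (i+t)) c) := by
  have hNr := Nrpos hn
  have hN : ((2*n-1 : ℕ):ℝ) = 2*(n:ℝ)-1 := Ncast hn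
  have hdcast : 2*(d:ℝ) < 2*(n:ℝ)-1 := by
    rw [← hN]; exact_mod_cast hdN
  have h0t' : (0:ℝ) < t := by exact_mod_cast h0t
  have htd' : (t:ℝ) < d := by exact_mod_cast htd
  apply cross_base
  · rw [sv_ppp hn]
    push_cast
    have s1 : 0 < sin (π*((i:ℝ)+d-i)/(2*(n:ℝ)-1)) := by apply spos hn <;> linarith
    have s2 : sin (π*((i:ℝ)+t-(i+d))/(2*(n:ℝ)-1)) < 0 := by apply sneg hn <;> linarith
    have s3 : 0 < sin (π*((i:ℝ)+t-i)/(2*(n:ℝ)-1)) := by apply spos hn <;> linarith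
    exact mul_neg_of_pos_of_neg (by positivity)
      (mul_neg_of_neg_of_pos (mul_neg_of_pos_of_neg s1 s2) s3)
  · rw [sv_ppc hn]
    push_cast
    have : 0 < sin (2*π*((i:ℝ)+d-i)/(2*(n:ℝ)-1)) := by apply s2pos hn <;> linarith
    positivity
  · rw [sv_pcp hn]
    push_cast
    have : 0 < sin (2*π*((i:ℝ)+t-i)/(2*(n:ℝ)-1)) := by apply s2pos hn <;> linarith
    positivity
  · rw [sv_pcp hn]
    push_cast
    have : sin (2*π*((i:ℝ)+t-(i+d))/(2*(n:ℝ)-1)) < 0 := by apply s2neg hn <;> linarith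
    nlinarith [sq_nonneg R, hR, this, mul_pos hR hR]

lemma cir_mod_eq (h : 0 < 2*n-1) {k l : ℕ} (hkl : k % (2*n-1) = l % (2*n-1)) :
    cir n h k = cir n h l := by simp [cir, Fin.ext_iff, hkl]

lemma cir_inj (h : 0 < 2*n-1) {k l : ℕ} (he : cir n h k = cir n h l) :
    k % (2*n-1) = l % (2*n-1) := by
  simpa [cir, Fin.ext_iff] using he

lemma modcancel {N i a b : ℕ} (hN : 0 < N) (ha : a < N) (hb : b < N)
    (h : (i+a) % N = (i+b) % N) : a = b := by
  have h2 : a % N = b % N := Nat.ModEq.add_left_cancel' i h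
  rwa [Nat.mod_eq_of_lt ha, Nat.mod_eq_of_lt hb] at h2

lemma cir_add_inj (h : 0 < 2*n-1) {i a b : ℕ} (ha : a < 2*n-1) (hb : b < 2*n-1)
    (he : cir n h (i+a) = cir n h (i+b)) : a = b :=
  modcancel h ha hb (cir_inj h he)

lemma ofs_eq {N : ℕ} (hN : 0 < N) {i k t : ℕ} (hi : i < N) (ht : t < N)
    (hcong : k % N = (i + t) % N) : (k + N - i) % N = t := by
  have h1 : ((k + N - i) + i) % N = (t + i) % N := by
    have : (k + N - i) + i = k + N := by omega
    rw [this, Nat.add_mod_right, hcong, Nat.add_comm i t]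
  have h2 := Nat.ModEq.add_right_cancel' i h1
  simpa [Nat.ModEq, Nat.mod_eq_of_lt ht] using h2

lemma cir_ofs (h : 0 < 2*n-1) {i : ℕ} (hi : i < 2*n-1) (k : ℕ) :
    cir n h (i + ((k + (2*n-1) - i) % (2*n-1))) = cir n h k := by
  apply cir_mod_eq h
  rw [Nat.add_mod_mod, show i + (k + (2*n-1) - i) = k + (2*n-1) by omega,
    Nat.add_mod_right]

/-- Crossing contradiction: chord `(i,i+d)` and radial to `i+t`. -/
lemma AL1 (hn : 2 ≤ n) (hR : 0 < R) (hT : PlaneSpanningTree (wpos n c R θ) T)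
    (h : 0 < 2*n-1) {i t d : ℕ} (h0t : 0 < t) (htd : t < d) (hdN : 2*d < 2*n-1)
    (hadj : T.Adj (cir n h i) (cir n h (i+d))) (hrad : T.Adj none (cir n h (i+t))) :
    False := by
  have hne : s(cir n h i, cir n h (i+d)) ≠ s(cir n h (i+t), (none : WV n)) := by
    simp [cir, Sym2.eq_iff]
  have hdisj := hT.2 _ _ _ _ hadj hrad.symm hne
  rw [wpos_cir hn, wpos_cir hn, wpos_cir hn] at hdisj
  have hwn : wpos n c R θ none = c := rfl
  rw [hwn] at hdisj
  exact GL1 hn hR h0t htd hdN hdisj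

/-- Crossing contradiction: chords `(i,i+d)` and `(i+t, i+u)`, `0<t<d<u<2n-1`. -/
lemma AL2 (hn : 2 ≤ n) (hR : 0 < R) (hT : PlaneSpanningTree (wpos n c R θ) T)
    (h : 0 < 2*n-1) {i t d u : ℕ} (h0t : 0 < t) (htd : t < d) (hdu : d < u)
    (huN : u < 2*n-1)
    (hadj : T.Adj (cir n h i) (cir n h (i+d)))
    (hadj2 : T.Adj (cir n h (i+t)) (cir n h (i+u))) : False := by
  have key : ∀ a b : ℕ, a < 2*n-1 → b < 2*n-1 → a ≠ b →
      cir n h (i+a) ≠ cir n h (i+b) := by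
    intro a b ha hb hab he
    exact hab (cir_add_inj h ha hb he)
  have hne : s(cir n h i, cir n h (i+d)) ≠ s(cir n h (i+t), cir n h (i+u)) := by
    intro he
    rw [Sym2.eq_iff] at he
    rcases he with ⟨h1, _⟩ | ⟨h1, _⟩
    · have := key 0 t (by omega) (by omega) (by omega)
      simp only [Nat.add_zero] at this
      exact this h1
    · have := key 0 u (by omega) (by omega) (by omega)
      simp only [Nat.add_zero] at this
      exact this h1
  have hdisj := hT.2 _ _ _ _ hadj hadj2 hne
  rw [wpos_cir hn, wpos_cir hn, wpos_cir hn, wpos_cir hn] at hdisj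
  exact GL2 hn c R θ hR h0t htd hdu huN hdisj

end WheelCfg

namespace WheelCfg
open Real

variable {n : ℕ} {c : ℝ × ℝ} {R θ : ℝ} {T : SimpleGraph (WV n)}

lemma ofs_decomp {N : ℕ} (hN : 0 < N) {i : ℕ} (hi : i < N) (k : ℕ) :
    (i + ((k + N - i) % N)) % N = k % N := by
  rw [Nat.add_mod_mod, show i + (k + N - i) = k + N by omega, Nat.add_mod_right]

lemma exists_neighbor (h : 0 < 2*n-1) (hT : T.IsTree) (v : WV n) : ∃ w, T.Adj v w := by
  obtain ⟨u, hu⟩ : ∃ u : WV n, u ≠ v := by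
    rcases v with _ | k
    · exact ⟨some ⟨0, h⟩, by simp⟩
    · exact ⟨none, by simp⟩
  obtain ⟨p⟩ := hT.isConnected.preconnected v u
  cases p with
  | nil => exact absurd rfl (Ne.symm hu)
  | cons h' _ => exact ⟨_, h'⟩

lemma walk_closed {C : Set (WV n)} (hC : ∀ v ∈ C, ∀ w, T.Adj v w → w ∈ C)
    {v w : WV n} (p : T.Walk v w) (hv : v ∈ C) : w ∈ C := by
  induction p with
  | nil => exact hv
  | cons h' _ ih => exact ih (hC _ hv _ h')

lemma repex (hn : 2 ≤ n) (h : 0 < 2*n-1) {p q : Fin (2*n-1)}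
    (hadj : T.Adj (some p) (some q)) :
    ∃ i d, i < 2*n-1 ∧ 1 ≤ d ∧ d ≤ n-1 ∧ T.Adj (cir n h i) (cir n h (i+d)) ∧
      ((p.val = i ∧ q.val = (i+d) % (2*n-1)) ∨ (q.val = i ∧ p.val = (i+d) % (2*n-1))) := by
  have key : ∀ p q : Fin (2*n-1), p.val < q.val → T.Adj (some p) (some q) →
      ∃ i d, i < 2*n-1 ∧ 1 ≤ d ∧ d ≤ n-1 ∧ T.Adj (cir n h i) (cir n h (i+d)) ∧
        ((p.val = i ∧ q.val = (i+d) % (2*n-1)) ∨ (q.val = i ∧ p.val = (i+d) % (2*n-1))) := by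
    intro p q hlt hadj
    have hp : p.val < 2*n-1 := p.isLt
    have hq : q.val < 2*n-1 := q.isLt
    have hsp : cir n h p.val = some p := by
      simp [cir, Fin.ext_iff, Nat.mod_eq_of_lt hp]
    have hsq : cir n h q.val = some q := by
      simp [cir, Fin.ext_iff, Nat.mod_eq_of_lt hq]
    by_cases hd1 : q.val - p.val ≤ n-1
    · refine ⟨p.val, q.val - p.val, hp, by omega, hd1, ?_, Or.inl ⟨rfl, ?_⟩⟩
      · have e2 : cir n h (p.val + (q.val - p.val)) = some q := by
          rw [show p.val + (q.val - p.val) = q.val by omega, hsq]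
        rw [hsp, e2]; exact hadj
      · rw [show p.val + (q.val - p.val) = q.val by omega, Nat.mod_eq_of_lt hq]
    · refine ⟨q.val, (2*n-1) - (q.val - p.val), hq, by omega, by omega, ?_,
        Or.inr ⟨rfl, ?_⟩⟩
      · have e2 : cir n h (q.val + ((2*n-1) - (q.val - p.val))) = some p := by
          rw [show q.val + ((2*n-1) - (q.val - p.val)) = (2*n-1) + p.val by omega]
          rw [show cir n h ((2*n-1) + p.val) = cir n h p.val from
            cir_mod_eq h (Nat.add_mod_left _ _), hsp]
        rw [hsq, e2]; exact hadj.symm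
      · rw [show q.val + ((2*n-1) - (q.val - p.val)) = (2*n-1) + p.val by omega,
          Nat.add_mod_left, Nat.mod_eq_of_lt hp]
  have hpq : p.val ≠ q.val := by
    intro hv
    exact T.ne_of_adj hadj (by rwa [Option.some_inj, ← Fin.ext_iff] at *)
  rcases lt_or_gt_of_ne hpq with hlt | hlt
  · exact key p q hlt hadj
  · obtain ⟨i, d, h1, h2, h3, h4, h5⟩ := key q p hlt hadj.symm
    exact ⟨i, d, h1, h2, h3, h4, h5.symm⟩

lemma C1 (hn : 2 ≤ n) (hR : 0 < R) (hT : PlaneSpanningTree (wpos n c R θ) T)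
    (h : 0 < 2*n-1) (g0 : Fin (2*n-1))
    (hg0 : ∀ k : Fin (2*n-1), T.Adj (some k) (some (nxt k)) → k = g0) :
    ∀ d i, i < 2*n-1 → 1 ≤ d → d ≤ n-1 → T.Adj (cir n h i) (cir n h (i+d)) →
      (g0.val + (2*n-1) - i) % (2*n-1) < d := by
  intro d
  induction d using Nat.strong_induction_on with
  | _ d ih =>
  intro i hi hd1 hdn hadj
  have hcir_i : cir n h i = some ⟨i, hi⟩ := by
    simp [cir, Fin.ext_iff, Nat.mod_eq_of_lt hi]
  have hnxt : cir n h (i+1) = some (nxt ⟨i, hi⟩) := rfl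
  by_cases hd : d = 1
  · subst hd
    have hb := hg0 ⟨i, hi⟩ (by rw [← hcir_i, ← hnxt]; exact hadj)
    rw [← hb]
    rw [show (i : ℕ) + (2*n-1) - i = 2*n-1 by omega, Nat.mod_self]
    omega
  · have hd2 : 2 ≤ d := by omega
    have hnorad : ¬ T.Adj none (cir n h (i+1)) := fun hr =>
      AL1 hn hR hT h (t := 1) (by omega) (by omega) (by omega) hadj hr
    obtain ⟨w, hw⟩ := exists_neighbor h hT.1 (cir n h (i+1))
    rcases w with _ | k2
    · exact absurd hw.symm hnorad
    obtain ⟨u, hu⟩ : ∃ u, u = (k2.val + (2*n-1) - i) % (2*n-1) := ⟨_, rfl⟩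
    have hcir_u : cir n h (i + u) = some k2 := by
      rw [hu, cir_ofs h hi k2.val]
      simp [cir, Fin.ext_iff, Nat.mod_eq_of_lt k2.isLt]
    have huN : u < 2*n-1 := by rw [hu]; exact Nat.mod_lt _ h
    have hune1 : u ≠ 1 := by
      intro h1
      rw [h1] at hcir_u
      exact hw.ne (hcir_u.symm ▸ rfl)
    rcases Nat.eq_zero_or_pos u with hu0 | hupos
    · rw [hu0] at hcir_u
      simp only [Nat.add_zero] at hcir_u
      have hk2 : k2 = ⟨i, hi⟩ := by
        have := hcir_u.symm.trans hcir_i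
        exact Option.some_injective _ this
    -- boundary edge at gap i
      have hbd : T.Adj (some (⟨i, hi⟩ : Fin (2*n-1))) (some (nxt ⟨i, hi⟩)) := by
        rw [← hnxt]
        rw [hk2] at hw
        exact hw.symm
      have hb := hg0 _ hbd
      rw [← hb]
      rw [show (i : ℕ) + (2*n-1) - i = 2*n-1 by omega, Nat.mod_self]
      omega
    · rcases le_or_gt u d with hud | hud
      · have hu2 : 2 ≤ u := by omega
        obtain ⟨i1, hi1⟩ : ∃ i1, i1 = (i+1) % (2*n-1) := ⟨_, rfl⟩
        have hi1N : i1 < 2*n-1 := by rw [hi1]; exact Nat.mod_lt _ h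
        have hadj2 : T.Adj (cir n h i1) (cir n h (i1 + (u-1))) := by
          have e1 : cir n h i1 = cir n h (i+1) := by
            rw [hi1]; exact cir_mod_eq h (Nat.mod_mod_of_dvd _ dvd_rfl)
          have e2 : cir n h (i1 + (u-1)) = cir n h (i + u) := by
            apply cir_mod_eq h
            rw [hi1, Nat.mod_add_mod, show i + 1 + (u-1) = i + u by omega]
          rw [e1, e2, hcir_u]
          exact hw
        have hrec := ih (u-1) (by omega) i1 hi1N (by omega) (by omega) hadj2
        obtain ⟨o1, ho1⟩ : ∃ o1, o1 = (g0.val + (2*n-1) - i1) % (2*n-1) := ⟨_, rfl⟩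
        rw [← ho1] at hrec
        have hofs : (g0.val + (2*n-1) - i) % (2*n-1) = o1 + 1 := by
          apply ofs_eq h hi (by omega)
          have e3 : g0.val % (2*n-1) = (i1 + o1) % (2*n-1) := by
            rw [ho1, ofs_decomp h hi1N g0.val]
          rw [e3, hi1, Nat.mod_add_mod, show i + 1 + o1 = i + (o1 + 1) by omega]
        rw [hofs]
        omega
      · exact (AL2 hn hR hT h (t := 1) (by omega) (by omega) hud huN hadj
          (by rw [hcir_u]; exact hw)).elim

end WheelCfg

namespace WheelCfg
open Real

variable {n : ℕ} {c : ℝ × ℝ} {R θ : ℝ} {T : SimpleGraph (WV n)}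

/-- Laminar helper: two chords whose minor intervals partially overlap must cross. -/
lemma AUXlam (hn : 2 ≤ n) (hR : 0 < R) (hT : PlaneSpanningTree (wpos n c R θ) T)
    (h : 0 < 2*n-1) {i d i' d' : ℕ} (hiN : i < 2*n-1) (hi'N : i' < 2*n-1)
    (hd : 1 ≤ d) (hdn : d ≤ n-1) (hd' : 1 ≤ d') (hd'n : d' ≤ n-1)
    (hadj : T.Adj (cir n h i) (cir n h (i+d)))
    (hadj' : T.Adj (cir n h i') (cir n h (i'+d')))
    {o o' : ℕ} (ho : (i + o) % (2*n-1) = (i' + o') % (2*n-1))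
    (hod : o < d) (ho'd : o' < d')
    (h1 : o' < o) (h2 : d - o < d' - o') : False := by
  have e1 : cir n h (i + (o - o')) = cir n h i' := by
    apply cir_mod_eq h
    have h5 : (i + (o - o') + o') % (2*n-1) = (i' + o') % (2*n-1) := by
      rw [show i + (o - o') + o' = i + o by omega, ho]
    exact Nat.ModEq.add_right_cancel' o' h5
  have e2 : cir n h (i + (o - o' + d')) = cir n h (i' + d') := by
    apply cir_mod_eq h
    have h5 : (i + (o - o' + d') + o') % (2*n-1) = ((i' + d') + o') % (2*n-1) := by
      rw [show i + (o - o' + d') + o' = (i + o) + d' by omega,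
        show (i' + d') + o' = (i' + o') + d' by omega]
      rw [Nat.add_mod, ho, ← Nat.add_mod]
    exact Nat.ModEq.add_right_cancel' o' h5
  exact AL2 hn hR hT h (t := o - o') (u := o - o' + d') (by omega) (by omega) (by omega)
    (by omega) hadj (by rw [e1, e2]; exact hadj')

end WheelCfg
open WheelCfg in
/-- A plane spanning tree of a regular wheel configuration with exactly one boundary edge
has at least `n` radial edges, and its radial edges go to consecutive circle points. -/
theorem stmt3 (n : ℕ) (hn : 2 ≤ n) (c : ℝ × ℝ) (R θ : ℝ) (hR : 0 < R)
    (T : SimpleGraph (WV n)) (hT : PlaneSpanningTree (wpos n c R θ) T)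
    (hb : boundaryCount T = 1) :
    ∃ s m : ℕ, n ≤ m ∧
      ∀ k : Fin (2*n-1), T.Adj none (some k) ↔ ∃ t < m, (s + t) % (2*n-1) = k.val := by
  classical
  have h : 0 < 2*n-1 := by omega
  have hcf : ∀ k : Fin (2*n-1), cir n h (k.val) = some k := fun k => by
    simp [cir, Fin.ext_iff, Nat.mod_eq_of_lt k.isLt]
  -- unique boundary gap
  obtain ⟨g0, hg0set⟩ := Set.ncard_eq_one.mp hb
  have hg0adj : T.Adj (some g0) (some (nxt g0)) := by
    have : g0 ∈ {k : Fin (2*n-1) | T.Adj (some k) (some (nxt k))} := by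
      rw [hg0set]; exact Set.mem_singleton _
    exact this
  have hg0uniq : ∀ k : Fin (2*n-1), T.Adj (some k) (some (nxt k)) → k = g0 := by
    intro k hk
    have : k ∈ ({g0} : Set (Fin (2*n-1))) := by rw [← hg0set]; exact hk
    simpa using this
  -- the finite set of minor representations of circle-circle edges
  obtain ⟨Q, hQdef⟩ : ∃ Q : Finset (ℕ × ℕ), Q = (Finset.range (2*n-1) ×ˢ Finset.Icc 1 (n-1)).filter
      (fun p => T.Adj (cir n h p.1) (cir n h (p.1 + p.2))) := ⟨_, rfl⟩
  have hQmem : ∀ i d : ℕ, ((i,d) ∈ Q ↔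
      (i < 2*n-1 ∧ 1 ≤ d ∧ d ≤ n-1 ∧ T.Adj (cir n h i) (cir n h (i+d)))) := by
    intro i d
    rw [hQdef]
    simp only [Finset.mem_filter, Finset.mem_product, Finset.mem_range, Finset.mem_Icc]
    tauto
  have hg0Q : (g0.val, 1) ∈ Q := by
    rw [hQmem]
    refine ⟨g0.isLt, le_refl 1, by omega, ?_⟩
    have e2 : cir n h (g0.val + 1) = some (nxt g0) := rfl
    rw [hcf, e2]; exact hg0adj
  have hQne : Q.Nonempty := ⟨_, hg0Q⟩
  obtain ⟨D, hDdef⟩ : ∃ D, D = (Q.image Prod.snd).max' (hQne.image _) := ⟨_, rfl⟩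
  have hDmem : D ∈ Q.image Prod.snd := hDdef ▸ Finset.max'_mem _ _
  obtain ⟨pD, hpDQ, hpD2⟩ := Finset.mem_image.mp hDmem
  obtain ⟨a, haQ⟩ : ∃ a, (a, D) ∈ Q := ⟨pD.1, by rw [← hpD2]; exact hpDQ⟩
  have hdmax : ∀ p ∈ Q, p.2 ≤ D :=
    fun p hp => hDdef ▸ Finset.le_max' _ _ (Finset.mem_image_of_mem _ hp)
  obtain ⟨haN, hD1, hDn, hadjmax⟩ := (hQmem a D).mp haQ
  have hC1' := C1 hn hR hT h g0 hg0uniq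
  obtain ⟨O, hOdef⟩ : ∃ O, O = (g0.val + (2*n-1) - a) % (2*n-1) := ⟨_, rfl⟩
  have hOlt : O < D := by rw [hOdef]; exact hC1' D a haN hD1 hDn hadjmax
  -- all minor intervals nest inside that of the maximal chord
  have hcont : ∀ i d, (i, d) ∈ Q →
      (g0.val + (2*n-1) - i) % (2*n-1) ≤ O ∧
      d - ((g0.val + (2*n-1) - i) % (2*n-1)) ≤ D - O := by
    intro i d hQ'
    obtain ⟨hiN, hd1, hdn, hadj⟩ := (hQmem i d).mp hQ'
    obtain ⟨o, hodef⟩ : ∃ o, o = (g0.val + (2*n-1) - i) % (2*n-1) := ⟨_, rfl⟩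
    have ho_lt : o < d := by rw [hodef]; exact hC1' d i hiN hd1 hdn hadj
    have hdD : d ≤ D := hdmax (i,d) hQ'
    rw [← hodef]
    have hcong : (i + o) % (2*n-1) = (a + O) % (2*n-1) := by
      rw [hodef, hOdef, ofs_decomp h hiN, ofs_decomp h haN]
    by_contra hcon
    push_neg at hcon
    rcases Nat.lt_or_ge O o with hOo | hoO
    · exact AUXlam hn hR hT h hiN haN hd1 hdn hD1 hDn hadj hadjmax hcong ho_lt hOlt hOo
        (by omega)
    · have h2 := hcon hoO
      have hoO' : o < O := by omega
      exact AUXlam hn hR hT h haN hiN hD1 hDn hd1 hdn hadjmax hadj hcong.symm hOlt ho_lt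
        hoO' h2
  -- every endpoint of a circle-circle edge lies in the closed interval [a, a+D]
  have hendpt : ∀ p q : Fin (2*n-1), T.Adj (some p) (some q) →
      (p.val + (2*n-1) - a) % (2*n-1) ≤ D := by
    intro p q hpq
    obtain ⟨i, d, hiN, hd1, hdn, hadj, hrep⟩ := repex hn h hpq
    have hQ' : (i, d) ∈ Q := by rw [hQmem]; exact ⟨hiN, hd1, hdn, hadj⟩
    obtain ⟨o, hodef⟩ : ∃ o, o = (g0.val + (2*n-1) - i) % (2*n-1) := ⟨_, rfl⟩
    have hoO : o ≤ O ∧ d - o ≤ D - O := by rw [hodef]; exact hcont i d hQ'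
    have ho_lt : o < d := by rw [hodef]; exact hC1' d i hiN hd1 hdn hadj
    have hcong : (i + o) % (2*n-1) = (a + O) % (2*n-1) := by
      rw [hodef, hOdef, ofs_decomp h hiN, ofs_decomp h haN]
    rcases hrep with ⟨hp1, _⟩ | ⟨_, hp1⟩
    · have hofs : (p.val + (2*n-1) - a) % (2*n-1) = O - o := by
        apply ofs_eq h haN (by omega)
        rw [hp1]
        have h5 : (i + o) % (2*n-1) = ((a + (O - o)) + o) % (2*n-1) := by
          rw [show (a + (O - o)) + o = a + O by omega]; exact hcong
        exact Nat.ModEq.add_right_cancel' o h5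
      omega
    · have hofs : (p.val + (2*n-1) - a) % (2*n-1) = O - o + d := by
        apply ofs_eq h haN (by omega)
        rw [hp1, Nat.mod_mod_of_dvd _ dvd_rfl]
        have h5 : ((i + d) + o) % (2*n-1) = ((a + (O - o + d)) + o) % (2*n-1) := by
          rw [show (i+d)+o = (i+o)+d by omega, show (a+(O-o+d))+o = (a+O)+d by omega,
            Nat.add_mod, hcong, ← Nat.add_mod]
        exact Nat.ModEq.add_right_cancel' o h5
      omega
  -- points strictly outside the interval have a radial edge
  have hOUT : ∀ k : Fin (2*n-1), D < (k.val + (2*n-1) - a) % (2*n-1) →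
      T.Adj none (some k) := by
    intro k hk
    obtain ⟨w, hw⟩ := exists_neighbor h hT.1 (some k)
    rcases w with _ | k2
    · exact hw.symm
    · exact absurd (hendpt k k2 hw) (by omega)
  -- points strictly inside the interval have no radial edge
  have hINT : ∀ k : Fin (2*n-1), 0 < (k.val + (2*n-1) - a) % (2*n-1) →
      (k.val + (2*n-1) - a) % (2*n-1) < D → ¬ T.Adj none (some k) := by
    intro k h1 h2 hr
    refine AL1 hn hR hT h (i := a) (t := (k.val + (2*n-1) - a) % (2*n-1)) (d := D)
      h1 h2 (by omega) hadjmax ?_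
    have e : cir n h (a + ((k.val + (2*n-1) - a) % (2*n-1))) = some k := by
      rw [cir_ofs h haN, hcf]
    rwa [e]
  by_cases ha : T.Adj none (some (⟨a, haN⟩ : Fin (2*n-1))) <;>
    by_cases haD : T.Adj none (some (⟨(a+D) % (2*n-1), Nat.mod_lt _ h⟩ : Fin (2*n-1)))
  · -- both endpoints radial
    refine ⟨(a+D) % (2*n-1), (2*n-1) + 1 - D, by omega, ?_⟩
    intro k
    obtain ⟨x, hxdef⟩ : ∃ x, x = (k.val + (2*n-1) - a) % (2*n-1) := ⟨_, rfl⟩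
    have hxN : x < 2*n-1 := by rw [hxdef]; exact Nat.mod_lt _ h
    have hkx : k.val = (a + x) % (2*n-1) := by
      rw [hxdef, ofs_decomp h haN, Nat.mod_eq_of_lt k.isLt]
    constructor
    · intro hadjk
      have hnotint : ¬(0 < x ∧ x < D) := fun hx =>
        hINT k (hxdef ▸ hx.1) (hxdef ▸ hx.2) hadjk
      rcases Nat.eq_zero_or_pos x with hx0 | hxpos
      · refine ⟨(2*n-1) - D, by omega, ?_⟩
        have e : ((a+D) % (2*n-1) + ((2*n-1) - D)) % (2*n-1) = a := by
          rw [Nat.mod_add_mod, show a + D + ((2*n-1) - D) = a + (2*n-1) by omega,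
            Nat.add_mod_right, Nat.mod_eq_of_lt haN]
        rw [e, hkx, hx0, Nat.add_zero, Nat.mod_eq_of_lt haN]
      · have hDx : D ≤ x := by omega
        refine ⟨x - D, by omega, ?_⟩
        rw [Nat.mod_add_mod, show a + D + (x - D) = a + x by omega, ← hkx]
    · rintro ⟨t, htm, hst⟩
      have hk2 : k.val = (a + (D + t)) % (2*n-1) := by
        rw [← hst, Nat.mod_add_mod, show a + D + t = a + (D+t) by omega]
      have hDtN : D + t ≤ 2*n-1 := by omega
      rcases eq_or_lt_of_le hDtN with hEQ | hLT
      · have hkv : k.val = a := by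
          rw [hk2, hEQ, Nat.add_mod_right, Nat.mod_eq_of_lt haN]
        have : k = ⟨a, haN⟩ := Fin.ext hkv
        rw [this]; exact ha
      · rcases Nat.eq_zero_or_pos t with ht0 | htpos
        · have hkv : k.val = (a+D) % (2*n-1) := by rw [hk2, ht0, Nat.add_zero]
          have : k = ⟨(a+D) % (2*n-1), Nat.mod_lt _ h⟩ := Fin.ext hkv
          rw [this]; exact haD
        · apply hOUT
          have e : (k.val + (2*n-1) - a) % (2*n-1) = D + t :=
            ofs_eq h haN hLT (by rw [Nat.mod_eq_of_lt k.isLt]; exact hk2)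
          rw [e]; omega
  · -- only the left endpoint `a` is radial
    refine ⟨(a+D+1) % (2*n-1), (2*n-1) - D, by omega, ?_⟩
    intro k
    obtain ⟨x, hxdef⟩ : ∃ x, x = (k.val + (2*n-1) - a) % (2*n-1) := ⟨_, rfl⟩
    have hxN : x < 2*n-1 := by rw [hxdef]; exact Nat.mod_lt _ h
    have hkx : k.val = (a + x) % (2*n-1) := by
      rw [hxdef, ofs_decomp h haN, Nat.mod_eq_of_lt k.isLt]
    constructor
    · intro hadjk
      have hnotint : ¬(0 < x ∧ x < D) := fun hx =>
        hINT k (hxdef ▸ hx.1) (hxdef ▸ hx.2) hadjk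
      have hxD : x ≠ D := by
        intro hxD
        apply haD
        have hkv : k.val = (a+D) % (2*n-1) := by rw [hkx, hxD]
        have : k = ⟨(a+D) % (2*n-1), Nat.mod_lt _ h⟩ := Fin.ext hkv
        rw [← this]; exact hadjk
      rcases Nat.eq_zero_or_pos x with hx0 | hxpos
      · refine ⟨(2*n-1) - D - 1, by omega, ?_⟩
        have e : ((a+D+1) % (2*n-1) + ((2*n-1) - D - 1)) % (2*n-1) = a := by
          rw [Nat.mod_add_mod, show a + D + 1 + ((2*n-1) - D - 1) = a + (2*n-1) by omega,
            Nat.add_mod_right, Nat.mod_eq_of_lt haN]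
        rw [e, hkx, hx0, Nat.add_zero, Nat.mod_eq_of_lt haN]
      · have hDx : D + 1 ≤ x := by omega
        refine ⟨x - D - 1, by omega, ?_⟩
        rw [Nat.mod_add_mod, show a + D + 1 + (x - D - 1) = a + x by omega, ← hkx]
    · rintro ⟨t, htm, hst⟩
      have hk2 : k.val = (a + (D + 1 + t)) % (2*n-1) := by
        rw [← hst, Nat.mod_add_mod, show a + D + 1 + t = a + (D+1+t) by omega]
      have hDtN : D + 1 + t ≤ 2*n-1 := by omega
      rcases eq_or_lt_of_le hDtN with hEQ | hLT
      · have hkv : k.val = a := by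
          rw [hk2, hEQ, Nat.add_mod_right, Nat.mod_eq_of_lt haN]
        have : k = ⟨a, haN⟩ := Fin.ext hkv
        rw [this]; exact ha
      · apply hOUT
        have e : (k.val + (2*n-1) - a) % (2*n-1) = D + 1 + t :=
          ofs_eq h haN hLT (by rw [Nat.mod_eq_of_lt k.isLt]; exact hk2)
        rw [e]; omega
  · -- only the right endpoint `a+D` is radial
    refine ⟨(a+D) % (2*n-1), (2*n-1) - D, by omega, ?_⟩
    intro k
    obtain ⟨x, hxdef⟩ : ∃ x, x = (k.val + (2*n-1) - a) % (2*n-1) := ⟨_, rfl⟩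
    have hxN : x < 2*n-1 := by rw [hxdef]; exact Nat.mod_lt _ h
    have hkx : k.val = (a + x) % (2*n-1) := by
      rw [hxdef, ofs_decomp h haN, Nat.mod_eq_of_lt k.isLt]
    constructor
    · intro hadjk
      have hnotint : ¬(0 < x ∧ x < D) := fun hx =>
        hINT k (hxdef ▸ hx.1) (hxdef ▸ hx.2) hadjk
      have hx0 : x ≠ 0 := by
        intro hx0
        apply ha
        have hkv : k.val = a := by rw [hkx, hx0, Nat.add_zero, Nat.mod_eq_of_lt haN]
        have : k = ⟨a, haN⟩ := Fin.ext hkv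
        rw [← this]; exact hadjk
      have hDx : D ≤ x := by omega
      refine ⟨x - D, by omega, ?_⟩
      rw [Nat.mod_add_mod, show a + D + (x - D) = a + x by omega, ← hkx]
    · rintro ⟨t, htm, hst⟩
      have hk2 : k.val = (a + (D + t)) % (2*n-1) := by
        rw [← hst, Nat.mod_add_mod, show a + D + t = a + (D+t) by omega]
      have hLT : D + t < 2*n-1 := by omega
      rcases Nat.eq_zero_or_pos t with ht0 | htpos
      · have hkv : k.val = (a+D) % (2*n-1) := by rw [hk2, ht0, Nat.add_zero]
        have : k = ⟨(a+D) % (2*n-1), Nat.mod_lt _ h⟩ := Fin.ext hkv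
        rw [this]; exact haD
      · apply hOUT
        have e : (k.val + (2*n-1) - a) % (2*n-1) = D + t :=
          ofs_eq h haN hLT (by rw [Nat.mod_eq_of_lt k.isLt]; exact hk2)
        rw [e]; omega
  · -- neither endpoint radial: impossible by connectivity
    exfalso
    have hnone : ∀ k : Fin (2*n-1), (k.val + (2*n-1) - a) % (2*n-1) ≤ D →
        ¬ T.Adj none (some k) := by
      intro k hk hr
      obtain ⟨x, hxdef⟩ : ∃ x, x = (k.val + (2*n-1) - a) % (2*n-1) := ⟨_, rfl⟩
      rw [← hxdef] at hk
      have hkx : k.val = (a + x) % (2*n-1) := by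
        rw [hxdef, ofs_decomp h haN, Nat.mod_eq_of_lt k.isLt]
      rcases Nat.eq_zero_or_pos x with hx0 | hxpos
      · apply ha
        have hkv : k.val = a := by rw [hkx, hx0, Nat.add_zero, Nat.mod_eq_of_lt haN]
        have : k = ⟨a, haN⟩ := Fin.ext hkv
        rw [← this]; exact hr
      · rcases eq_or_lt_of_le hk with hxD | hxD
        · apply haD
          have hkv : k.val = (a+D) % (2*n-1) := by rw [hkx, hxD]
          have : k = ⟨(a+D) % (2*n-1), Nat.mod_lt _ h⟩ := Fin.ext hkv
          rw [← this]; exact hr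
        · exact hINT k (hxdef ▸ hxpos) (hxdef ▸ hxD) hr
    obtain ⟨C, hCdef⟩ : ∃ C : Set (WV n),
        C = {v | ∃ k : Fin (2*n-1), v = some k ∧ (k.val + (2*n-1) - a) % (2*n-1) ≤ D} :=
      ⟨_, rfl⟩
    have hclosed : ∀ v ∈ C, ∀ w, T.Adj v w → w ∈ C := by
      intro v hv w hvw
      rw [hCdef] at hv
      obtain ⟨k, rfl, hk⟩ := hv
      rcases w with _ | k2
      · exact absurd hvw.symm (hnone k hk)
      · rw [hCdef]
        exact ⟨k2, rfl, hendpt k2 k hvw.symm⟩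
    have haC : some (⟨a, haN⟩ : Fin (2*n-1)) ∈ C := by
      rw [hCdef]
      refine ⟨⟨a, haN⟩, rfl, ?_⟩
      simp only
      rw [show a + (2*n-1) - a = 2*n-1 by omega, Nat.mod_self]
      omega
    obtain ⟨p⟩ := hT.1.isConnected.preconnected (some (⟨a, haN⟩ : Fin (2*n-1))) none
    have hfin := walk_closed hclosed p haC
    rw [hCdef] at hfin
    obtain ⟨k, hk, -⟩ := hfin
    exact (Option.some_ne_none k) hk.symm
end

section
/- Let P be a set of 2n points in regular wheel configuration, n ≥ 2. If T is a plane spanning tree on P having k radial edges with k < n, then T has at least two boundary edges. -/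
open scoped Real

/-!
Index the circle points by `ℕ` modulo `2n - 1` (`cir k`). A chord `(a, a + d)` of `T` with
`d ≤ n - 1` cannot be crossed by an edge of `T`; as the center lies beyond it, every neighbour of a
point strictly inside its arc lies on the closed arc. Since every vertex has a neighbour, induction
on `d` finds a boundary edge of `T` under every such chord.

Take a chord `(a, a + D)` of maximal span. If another chord has its arc edge-disjoint from this
one, their boundary edges are distinct. Otherwise planarity and maximality confine every chord to
the closed arc `[a, a + D]`, so the `2n - 1 - (D + 1) ≥ n - 1` points outside it are joined only to
the center, and connectivity needs one more radial edge from the arc: `T` has at least `n` radial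
edges. (Without any chord all `2n - 1` circle points are radial.)
-/

namespace WheelCfg

lemma sideVal_rotate (u v p : ℝ × ℝ) : sideVal u v p = sideVal v p u := by
  unfold sideVal; ring

lemma sideVal_swap (u v p : ℝ × ℝ) : sideVal u v p = -sideVal u p v := by
  unfold sideVal; ring

lemma div_sub_mem_Ioo_of_mul_neg {x y : ℝ} (h : x * y < 0) : x / (x - y) ∈ Set.Ioo 0 1 := by
  rcases mul_neg_iff.1 h with ⟨hx, hy⟩ | ⟨hx, hy⟩
  · exact ⟨div_pos hx (by linarith), (div_lt_one (by linarith)).2 (by linarith)⟩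
  · exact ⟨div_pos_of_neg_of_neg hx (by linarith),
      (div_lt_one_of_neg (by linarith)).2 (by linarith)⟩

theorem not_disjoint_openSegment_of_sideVal {u v p q : ℝ × ℝ}
    (hpq : sideVal u v p * sideVal u v q < 0) (huv : sideVal p q u * sideVal p q v < 0) :
    ¬ Disjoint (openSegment ℝ u v) (openSegment ℝ p q) := by
  set a := sideVal p q u
  set b := sideVal p q v
  set s := sideVal u v p
  set t := sideVal u v q
  have hab : a - b ≠ 0 := sub_ne_zero.2 fun h => by rw [h] at huv; nlinarith
  have hst : s - t ≠ 0 := sub_ne_zero.2 fun h => by rw [h] at hpq; nlinarith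
  rw [Set.not_disjoint_iff]
  refine ⟨(1 - a / (a - b)) • u + (a / (a - b)) • v, ?_, ?_⟩
  · rw [openSegment_eq_image]
    exact ⟨_, div_sub_mem_Ioo_of_mul_neg huv, rfl⟩
  · rw [openSegment_eq_image]
    refine ⟨_, div_sub_mem_Ioo_of_mul_neg hpq, ?_⟩
    ext <;> simp only [Prod.smul_fst, Prod.fst_add, Prod.smul_snd, Prod.snd_add, smul_eq_mul] <;>
      field_simp <;> simp only [a, b, s, t, sideVal] <;> ring

noncomputable def circlePt (c : ℝ × ℝ) (R α : ℝ) : ℝ × ℝ :=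
  (c.1 + R * Real.cos α, c.2 + R * Real.sin α)

lemma circlePt_add_nat_mul_two_pi (c : ℝ × ℝ) (R α : ℝ) (k : ℕ) :
    circlePt c R (α + k * (2 * π)) = circlePt c R α := by
  simp only [circlePt, Real.cos_add_nat_mul_two_pi, Real.sin_add_nat_mul_two_pi]

lemma sideVal_center_circlePt (c : ℝ × ℝ) (R α β : ℝ) :
    sideVal c (circlePt c R α) (circlePt c R β) = R ^ 2 * Real.sin (β - α) := by
  simp only [sideVal, circlePt, Real.sin_sub]; ring

lemma sin_add_sin_sub_sin_add (x y : ℝ) :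
    Real.sin (2 * x) + Real.sin (2 * y) - Real.sin (2 * x + 2 * y) =
      4 * Real.sin x * Real.sin y * Real.sin (x + y) := by
  rw [show 2 * x + 2 * y = 2 * (x + y) by ring]
  simp only [Real.sin_two_mul, Real.sin_add, Real.cos_add]
  linear_combination (-2 * Real.sin x * Real.cos x) * Real.sin_sq_add_cos_sq y
    + (-2 * Real.sin y * Real.cos y) * Real.sin_sq_add_cos_sq x

lemma sideVal_circlePt (c : ℝ × ℝ) (R α β γ : ℝ) :
    sideVal (circlePt c R α) (circlePt c R β) (circlePt c R γ) =
      4 * R ^ 2 * Real.sin ((β - α) / 2) * Real.sin ((γ - β) / 2) * Real.sin ((γ - α) / 2) := by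
  have h := sin_add_sin_sub_sin_add ((β - α) / 2) ((γ - β) / 2)
  rw [show 2 * ((β - α) / 2) = β - α by ring, show 2 * ((γ - β) / 2) = γ - β by ring,
    show β - α + (γ - β) = γ - α by ring, show (β - α) / 2 + (γ - β) / 2 = (γ - α) / 2 by ring,
    Real.sin_sub β, Real.sin_sub γ β, Real.sin_sub γ α] at h
  simp only [sideVal, circlePt]
  linear_combination R ^ 2 * h

section CirclePt

variable {c : ℝ × ℝ} {R : ℝ}

lemma sideVal_circlePt_pos (hR : 0 < R) {α β γ : ℝ} (hαβ : α < β) (hβγ : β < γ)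
    (hγα : γ < α + 2 * π) :
    0 < sideVal (circlePt c R α) (circlePt c R β) (circlePt c R γ) := by
  have hsin : ∀ {x}, 0 < x → x < 2 * π → 0 < Real.sin (x / 2) := fun h0 h1 =>
    Real.sin_pos_of_pos_of_lt_pi (by linarith) (by linarith)
  rw [sideVal_circlePt]
  have := hsin (sub_pos.2 hαβ) (by linarith)
  have := hsin (sub_pos.2 hβγ) (by linarith)
  have := hsin (sub_pos.2 (hαβ.trans hβγ)) (by linarith)
  positivity

lemma sideVal_center_circlePt_pos (hR : 0 < R) {α β : ℝ} (hαβ : α < β) (hβα : β < α + π) :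
    0 < sideVal c (circlePt c R α) (circlePt c R β) := by
  rw [sideVal_center_circlePt]
  have := Real.sin_pos_of_pos_of_lt_pi (sub_pos.2 hαβ) (by linarith)
  positivity

lemma not_disjoint_openSegment_chords (hR : 0 < R) {α₁ α₂ α₃ α₄ : ℝ} (h₁₂ : α₁ < α₂)
    (h₂₃ : α₂ < α₃) (h₃₄ : α₃ < α₄) (h₄₁ : α₄ < α₁ + 2 * π) :
    ¬ Disjoint (openSegment ℝ (circlePt c R α₁) (circlePt c R α₃))
      (openSegment ℝ (circlePt c R α₂) (circlePt c R α₄)) := by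
  apply not_disjoint_openSegment_of_sideVal
  · rw [sideVal_swap]
    nlinarith [sideVal_circlePt_pos (c := c) hR h₁₂ h₂₃ (by linarith),
      sideVal_circlePt_pos (c := c) hR (h₁₂.trans h₂₃) h₃₄ h₄₁]
  · rw [← sideVal_rotate, sideVal_swap (circlePt c R α₂)]
    nlinarith [sideVal_circlePt_pos (c := c) hR h₁₂ (h₂₃.trans h₃₄) h₄₁,
      sideVal_circlePt_pos (c := c) hR h₂₃ h₃₄ (by linarith)]

lemma not_disjoint_openSegment_chord_radius (hR : 0 < R) {α₁ α₂ α₃ : ℝ} (h₁₂ : α₁ < α₂)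
    (h₂₃ : α₂ < α₃) (h₃₁ : α₃ < α₁ + π) :
    ¬ Disjoint (openSegment ℝ (circlePt c R α₁) (circlePt c R α₃))
      (openSegment ℝ c (circlePt c R α₂)) := by
  apply not_disjoint_openSegment_of_sideVal
  · rw [← sideVal_rotate, sideVal_swap _ _ (circlePt c R α₂)]
    nlinarith [sideVal_center_circlePt_pos (c := c) hR (h₁₂.trans h₂₃) h₃₁,
      sideVal_circlePt_pos (c := c) hR h₁₂ h₂₃ (by linarith [Real.pi_pos])]
  · rw [sideVal_swap c]
    nlinarith [sideVal_center_circlePt_pos (c := c) hR h₁₂ (by linarith),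
      sideVal_center_circlePt_pos (c := c) hR h₂₃ (by linarith)]

end CirclePt

lemma strictMono_add_two_pi_mul_div (θ : ℝ) {M : ℝ} (hM : 0 < M) :
    StrictMono fun t : ℝ => θ + 2 * π * t / M := fun x y h => by
  have := Real.pi_pos
  dsimp only
  gcongr

lemma add_two_pi_mul_div_lt {M x y : ℝ} (θ r : ℝ) (hM : 0 < M) (h : x < y + r * M) :
    θ + 2 * π * x / M < θ + 2 * π * y / M + 2 * π * r := by
  have : θ + 2 * π * x / M < θ + 2 * π * (y + r * M) / M :=
    strictMono_add_two_pi_mul_div θ hM h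
  rw [mul_add, add_div, mul_div_assoc (2 * π) (r * M), mul_div_cancel_right₀ _ hM.ne'] at this
  linarith

lemma two_mul_sub_one_pos_real {n : ℕ} (hm : 0 < 2 * n - 1) : (0 : ℝ) < 2 * n - 1 := by
  have : (1 : ℝ) ≤ n := by exact_mod_cast (by omega : 1 ≤ n)
  linarith

lemma cast_two_mul_sub_one {n : ℕ} (hm : 0 < 2 * n - 1) :
    ((2 * n - 1 : ℕ) : ℝ) = 2 * n - 1 := by
  rw [Nat.cast_sub (by omega)]; push_cast; ring

section Graph

variable {n : ℕ} {T : SimpleGraph (WV n)}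

lemma exists_adj_of_connected (hm : 0 < 2 * n - 1) (hconn : T.Connected) (v : WV n) :
    ∃ w, T.Adj v w :=
  haveI : Nontrivial (WV n) := ⟨⟨none, some ⟨0, hm⟩, by simp⟩⟩
  hconn.preconnected.exists_adj_of_nontrivial v

theorem sub_card_lt_radialCount (hm : 0 < 2 * n - 1) (hconn : T.Connected)
    {A : Finset (Fin (2 * n - 1))} (hA : A.Nonempty)
    (hchord : ∀ x y, T.Adj (some x) (some y) → x ∈ A) :
    2 * n - 1 - A.card < radialCount T := by
  classical
  have houter : ∀ k ∉ A, T.Adj none (some k) := by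
    intro k hk
    obtain ⟨w, hw⟩ := exists_adj_of_connected hm hconn (some k)
    cases w with
    | none => exact hw.symm
    | some z => exact absurd (hchord k z hw) hk
  obtain ⟨k₀, hk₀A, hk₀⟩ : ∃ k ∈ A, T.Adj none (some k) := by
    obtain ⟨a, ha⟩ := hA
    obtain ⟨p⟩ := hconn.preconnected (some a) none
    obtain ⟨e, -, he, he'⟩ := p.exists_boundary_dart (Option.some '' A) ⟨a, ha, rfl⟩ (by simp)
    obtain ⟨k, hk, hek⟩ := he
    cases hsnd : e.snd with
    | none => exact ⟨k, hk, by rw [hek, ← hsnd]; exact e.adj.symm⟩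
    | some z =>
      exact absurd ⟨z, hchord z k (by rw [hek, ← hsnd]; exact e.adj.symm), hsnd.symm⟩ he'
  have hsub : ↑(insert k₀ Aᶜ) ⊆ {k : Fin (2 * n - 1) | T.Adj none (some k)} := by
    intro k hk
    rcases Finset.mem_insert.1 hk with rfl | hk
    · exact hk₀
    · exact houter k (Finset.mem_compl.1 hk)
  have := Set.ncard_le_ncard hsub (Set.toFinite _)
  rw [Set.ncard_coe_finset, Finset.card_insert_of_notMem (by simpa using hk₀A),
    Finset.card_compl, Fintype.card_fin] at this
  exact this

end Graph

section Wheel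

variable {n : ℕ} (hm : 0 < 2 * n - 1)

def idx (k : ℕ) : Fin (2 * n - 1) := ⟨k % (2 * n - 1), Nat.mod_lt _ hm⟩

/-- The indices `a, a + 1, …, a + d - 1` mod `2n - 1`: the boundary edges `(k, k + 1)` under the
chord `(a, a + d)`; for `d = D + 1`, the points of the closed arc of the chord `(a, a + D)`. -/
def window (a d : ℕ) : Finset (Fin (2 * n - 1)) :=
  (Finset.range d).image fun j => idx hm (a + j)

lemma idx_mem_window {a d j : ℕ} (hj : j < d) : idx hm (a + j) ∈ window hm a d :=
  Finset.mem_image_of_mem _ (Finset.mem_range.2 hj)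

lemma window_mono {a i d d' : ℕ} (h : i + d' ≤ d) : window hm (a + i) d' ⊆ window hm a d := by
  intro v hv
  obtain ⟨j, hj, rfl⟩ := Finset.mem_image.1 hv
  rw [Finset.mem_range] at hj
  rw [add_assoc]
  exact idx_mem_window hm (by omega)

lemma card_window_le (a d : ℕ) : (window hm a d).card ≤ d :=
  Finset.card_image_le.trans (Finset.card_range d).le

lemma nxt_idx (k : ℕ) : nxt (idx hm k) = idx hm (k + 1) :=
  Fin.ext (Nat.mod_add_mod k _ 1)

lemma cir_eq_cir_iff {x y : ℕ} : cir n hm x = cir n hm y ↔ idx hm x = idx hm y :=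
  Option.some_inj

lemma cir_ne_cir {i j : ℕ} (hij : i < j) (hji : j < i + (2 * n - 1)) :
    cir n hm i ≠ cir n hm j := by
  intro h
  simp only [cir, Option.some_inj, Fin.mk.injEq] at h
  have := (Nat.modEq_iff_dvd' hij.le).1 h
  have := Nat.le_of_dvd (by omega) this
  omega

lemma cir_add_period (k : ℕ) : cir n hm (k + (2 * n - 1)) = cir n hm k := by
  simp [cir]

lemma cir_add_congr {x y : ℕ} (h : cir n hm x = cir n hm y) (k : ℕ) :
    cir n hm (x + k) = cir n hm (y + k) := by
  simp only [cir, Option.some_inj, Fin.mk.injEq] at h ⊢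
  exact Nat.ModEq.add_right k h

lemma exists_cir_add_eq (a : ℕ) (v : Fin (2 * n - 1)) :
    ∃ e < 2 * n - 1, cir n hm (a + e) = some v := by
  refine ⟨(v + (2 * n - 1) * a - a) % (2 * n - 1), Nat.mod_lt _ hm, ?_⟩
  have : a ≤ (2 * n - 1) * a := Nat.le_mul_of_pos_left a hm
  simp only [cir, Option.some_inj, Fin.ext_iff, Nat.add_mod_mod]
  rw [show a + (v + (2 * n - 1) * a - a) = v + (2 * n - 1) * a by omega,
    Nat.add_mul_mod_self_left, Nat.mod_eq_of_lt v.2]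

lemma wpos_cir_s4 (c : ℝ × ℝ) (R θ : ℝ) (k : ℕ) :
    wpos n c R θ (cir n hm k) = circlePt c R (θ + 2 * π * k / (2 * n - 1)) := by
  have hM := two_mul_sub_one_pos_real hm
  have hk : (k : ℝ) = (k % (2 * n - 1) : ℕ) + (k / (2 * n - 1) : ℕ) * (2 * n - 1) := by
    rw [← cast_two_mul_sub_one hm]; exact_mod_cast (Nat.mod_add_div' k (2 * n - 1)).symm
  have hangle : θ + 2 * π * k / (2 * n - 1) =
      θ + 2 * π * (k % (2 * n - 1) : ℕ) / (2 * n - 1) + (k / (2 * n - 1) : ℕ) * (2 * π) := by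
    rw [hk]; field_simp; ring
  rw [hangle, circlePt_add_nat_mul_two_pi]
  rfl

variable {T : SimpleGraph (WV n)}

lemma exists_short_chord_of_adj {x y : Fin (2 * n - 1)} (h : T.Adj (some x) (some y)) :
    ∃ b d, 1 ≤ d ∧ d ≤ n - 1 ∧ T.Adj (cir n hm b) (cir n hm (b + d)) ∧
      s(some x, some y) = s(cir n hm b, cir n hm (b + d)) := by
  have hx : cir n hm x = some x := by simp [cir, Nat.mod_eq_of_lt x.2]
  obtain ⟨e, he, hy⟩ := exists_cir_add_eq hm x y
  have he0 : e ≠ 0 := by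
    rintro rfl
    exact T.ne_of_adj h (by rw [← hx, ← hy, add_zero])
  by_cases hen : e ≤ n - 1
  · exact ⟨x, e, by omega, hen, by rwa [hx, hy], by rw [hx, hy]⟩
  · have hx' : cir n hm (x + e + (2 * n - 1 - e)) = some x := by
      rw [show (x : ℕ) + e + (2 * n - 1 - e) = x + (2 * n - 1) by omega, cir_add_period, hx]
    exact ⟨x + e, 2 * n - 1 - e, by omega, by omega, by rw [hx', hy]; exact h.symm,
      by rw [hx', hy, Sym2.eq_swap]⟩

lemma exists_short_chord (hconn : T.Connected) (hrad : radialCount T < 2 * n - 1) :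
    ∃ d ≤ n - 1, ∃ b, T.Adj (cir n hm b) (cir n hm (b + d)) := by
  by_contra! hno
  have := sub_card_lt_radialCount hm hconn (Finset.singleton_nonempty (idx hm 0)) fun x y h => by
    obtain ⟨b, d, -, hdn, hbd, -⟩ := exists_short_chord_of_adj hm h
    exact absurd hbd (hno d hdn b)
  rw [Finset.card_singleton] at this
  omega

variable {c : ℝ × ℝ} {R θ : ℝ}

lemma NonCrossing.not_adj_cir_of_interleave (hT : NonCrossing (wpos n c R θ) T) (hR : 0 < R)
    {i j k l : ℕ} (hij : i < j) (hjk : j < k) (hkl : k < l) (hli : l < i + (2 * n - 1))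
    (hik : T.Adj (cir n hm i) (cir n hm k)) : ¬ T.Adj (cir n hm j) (cir n hm l) := by
  intro hjl
  have hne : s(cir n hm i, cir n hm k) ≠ s(cir n hm j, cir n hm l) := by
    rw [Ne, Sym2.eq_iff]
    rintro (⟨h, -⟩ | ⟨-, h⟩)
    · exact cir_ne_cir hm hij (by omega) h
    · exact cir_ne_cir hm hjk (by omega) h.symm
  have hM := two_mul_sub_one_pos_real hm
  have hmono := strictMono_add_two_pi_mul_div θ hM
  have hli' : (l : ℝ) < i + 1 * (2 * n - 1) := by
    rw [one_mul, ← cast_two_mul_sub_one hm]; exact_mod_cast hli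
  have := hT _ _ _ _ hik hjl hne
  simp only [wpos_cir_s4] at this
  refine not_disjoint_openSegment_chords hR (hmono (Nat.cast_lt.2 hij))
    (hmono (Nat.cast_lt.2 hjk)) (hmono (Nat.cast_lt.2 hkl)) ?_ this
  simpa using add_two_pi_mul_div_lt θ 1 hM hli'

lemma NonCrossing.not_adj_center_of_lt (hT : NonCrossing (wpos n c R θ) T) (hR : 0 < R)
    {i j k : ℕ} (hij : i < j) (hjk : j < k) (hki : 2 * k < 2 * i + (2 * n - 1))
    (hik : T.Adj (cir n hm i) (cir n hm k)) : ¬ T.Adj none (cir n hm j) := by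
  intro hj
  have hne : s(cir n hm i, cir n hm k) ≠ s(none, cir n hm j) := by
    rw [Ne, Sym2.eq_iff]
    rintro (⟨h, -⟩ | ⟨-, h⟩) <;> simp [cir] at h
  have hM := two_mul_sub_one_pos_real hm
  have hmono := strictMono_add_two_pi_mul_div θ hM
  have hki' : (k : ℝ) < i + 1 / 2 * (2 * n - 1) := by
    have : ((2 * k : ℕ) : ℝ) < (2 * i + (2 * n - 1) : ℕ) := by exact_mod_cast hki
    push_cast [cast_two_mul_sub_one hm] at this
    linarith
  have := hT _ _ _ _ hik hj hne
  simp only [wpos_cir_s4] at this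
  refine not_disjoint_openSegment_chord_radius hR (hmono (Nat.cast_lt.2 hij))
    (hmono (Nat.cast_lt.2 hjk)) ?_ this
  linarith [add_two_pi_mul_div_lt θ (1 / 2) hM hki']

lemma NonCrossing.exists_eq_cir_of_adj (hT : NonCrossing (wpos n c R θ) T) (hR : 0 < R)
    {a d j : ℕ} (hd : d ≤ n - 1) (hadj : T.Adj (cir n hm a) (cir n hm (a + d)))
    (hj : 0 < j) (hjd : j < d) {w : WV n} (hw : T.Adj (cir n hm (a + j)) w) :
    ∃ e ≤ d, w = cir n hm (a + e) := by
  cases w with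
  | none =>
    exact absurd hw.symm (hT.not_adj_center_of_lt hm hR (by omega) (by omega) (by omega) hadj)
  | some z =>
    obtain ⟨e, he, hz⟩ := exists_cir_add_eq hm a z
    refine ⟨e, ?_, hz.symm⟩
    by_contra! hde
    rw [← hz] at hw
    exact hT.not_adj_cir_of_interleave hm hR (by omega) (by omega) (by omega) (by omega) hadj hw

theorem NonCrossing.exists_boundary_mem_window (hT : NonCrossing (wpos n c R θ) T)
    (hconn : T.Connected) (hR : 0 < R) (d : ℕ) (hd : 1 ≤ d) (hdn : d ≤ n - 1) (a : ℕ)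
    (hadj : T.Adj (cir n hm a) (cir n hm (a + d))) :
    ∃ k ∈ window hm a d, T.Adj (some k) (some (nxt k)) := by
  induction d using Nat.strong_induction_on generalizing a with
  | _ d ih =>
    rcases hd.eq_or_lt with rfl | hd
    · exact ⟨idx hm a, by simpa using idx_mem_window hm (a := a) zero_lt_one,
        by rw [nxt_idx]; exact hadj⟩
    obtain ⟨w, hw⟩ := exists_adj_of_connected hm hconn (cir n hm (a + 1))
    obtain ⟨e, hed, rfl⟩ := hT.exists_eq_cir_of_adj hm hR hdn hadj one_pos hd hw
    rcases Nat.lt_or_ge e 2 with he | he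
    · obtain rfl : e = 0 := by
        by_contra he0
        exact T.ne_of_adj hw (by rw [show e = 1 by omega])
      exact ⟨idx hm a, by simpa using idx_mem_window hm (a := a) (by omega : 0 < d),
        by rw [nxt_idx]; exact hw.symm⟩
    · obtain ⟨k, hk, hbk⟩ := ih (e - 1) (by omega) (by omega) (by omega) (a + 1)
        (by rwa [show a + 1 + (e - 1) = a + e by omega])
      exact ⟨k, window_mono hm (by omega) hk, hbk⟩

theorem NonCrossing.mem_window_of_not_disjoint (hT : NonCrossing (wpos n c R θ) T) (hR : 0 < R)
    {a D b d : ℕ} (hDn : D ≤ n - 1) (haD : T.Adj (cir n hm a) (cir n hm (a + D)))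
    (hdD : d ≤ D) (hbd : T.Adj (cir n hm b) (cir n hm (b + d)))
    (hover : ¬ Disjoint (window hm b d) (window hm a D)) :
    idx hm b ∈ window hm a (D + 1) ∧ idx hm (b + d) ∈ window hm a (D + 1) := by
  obtain ⟨β, hβ, hb⟩ := exists_cir_add_eq hm a (idx hm b)
  replace hb : cir n hm (a + β) = cir n hm b := hb
  have hbd' := cir_add_congr hm hb d
  rw [← hb, ← hbd'] at hbd
  obtain ⟨v, hvb, hva⟩ := Finset.not_disjoint_iff.1 hover
  obtain ⟨i', hi', rfl⟩ := Finset.mem_image.1 hvb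
  obtain ⟨i, hi, hi_eq⟩ := Finset.mem_image.1 hva
  rw [Finset.mem_range] at hi hi'
  have hover' : cir n hm (a + i) = cir n hm (a + β + i') := by
    rw [cir_add_congr hm hb i']; exact (cir_eq_cir_iff hm).2 hi_eq
  rcases Nat.lt_or_ge β D with hβD | hDβ
  · rcases Nat.lt_or_ge D (β + d) with hDd | hdD'
    · exfalso
      exact hT.not_adj_cir_of_interleave hm hR (i := a) (j := a + β) (k := a + D)
        (l := a + β + d) (by omega) (by omega) (by omega) (by omega) haD hbd
    · constructor
      · rw [← (cir_eq_cir_iff hm).1 hb]; exact idx_mem_window hm (by omega)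
      · rw [← (cir_eq_cir_iff hm).1 hbd', add_assoc]; exact idx_mem_window hm (by omega)
  · -- the overlap forces `(b, b + d)` to wrap around past `a`, so it crosses `(a + D, a)`
    exfalso
    have hwrap : 2 * n - 1 ≤ β + i' := by
      by_contra! h
      exact cir_ne_cir hm (i := a + i) (j := a + β + i') (by omega) (by omega) hover'
    have haD' : T.Adj (cir n hm (a + D)) (cir n hm (a + (2 * n - 1))) := by
      rw [cir_add_period]; exact haD.symm
    exact hT.not_adj_cir_of_interleave hm hR (i := a + D) (j := a + β) (k := a + (2 * n - 1))
      (l := a + β + d) (by omega) (by omega) (by omega) (by omega) haD' hbd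

theorem NonCrossing.two_le_boundaryCount (hT : NonCrossing (wpos n c R θ) T)
    (hconn : T.Connected) (hR : 0 < R) {a d b d' : ℕ} (hd : 1 ≤ d) (hdn : d ≤ n - 1)
    (had : T.Adj (cir n hm a) (cir n hm (a + d))) (hd' : 1 ≤ d') (hd'n : d' ≤ n - 1)
    (hbd : T.Adj (cir n hm b) (cir n hm (b + d')))
    (hdisj : Disjoint (window hm b d') (window hm a d)) :
    2 ≤ boundaryCount T := by
  obtain ⟨k, hk, hka⟩ := hT.exists_boundary_mem_window hm hconn hR d hd hdn a had
  obtain ⟨k', hk', hkb⟩ := hT.exists_boundary_mem_window hm hconn hR d' hd' hd'n b hbd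
  exact (Set.one_lt_ncard_iff (Set.toFinite _)).2
    ⟨k, k', hka, hkb, fun h => Finset.disjoint_left.1 hdisj hk' (h ▸ hk)⟩

lemma NonCrossing.mem_window_of_adj (hT : NonCrossing (wpos n c R θ) T) (hR : 0 < R) {a D : ℕ}
    (hDn : D ≤ n - 1) (haD : T.Adj (cir n hm a) (cir n hm (a + D)))
    (hmax : ∀ b d, d ≤ n - 1 → T.Adj (cir n hm b) (cir n hm (b + d)) → d ≤ D)
    (hnest : ∀ b d, 1 ≤ d → d ≤ n - 1 → T.Adj (cir n hm b) (cir n hm (b + d)) →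
      ¬ Disjoint (window hm b d) (window hm a D))
    {x y : Fin (2 * n - 1)} (h : T.Adj (some x) (some y)) : x ∈ window hm a (D + 1) := by
  obtain ⟨b, d, hd, hdn, hbd, hxy⟩ := exists_short_chord_of_adj hm h
  obtain ⟨hb, hb'⟩ :=
    hT.mem_window_of_not_disjoint hm hR hDn haD (hmax b d hdn hbd) hbd (hnest b d hd hdn hbd)
  have hx : some x ∈ s(cir n hm b, cir n hm (b + d)) := hxy ▸ Sym2.mem_mk_left _ _
  rcases Sym2.mem_iff.1 hx with hx | hx <;> rwa [Option.some_inj.1 hx]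

end Wheel

end WheelCfg

open WheelCfg in
/-- A plane spanning tree of a regular wheel configuration with fewer than `n` radial edges
has at least two boundary edges. -/
theorem stmt4 (n : ℕ) (hn : 2 ≤ n) (c : ℝ × ℝ) (R θ : ℝ) (hR : 0 < R)
    (T : SimpleGraph (WV n)) (hT : PlaneSpanningTree (wpos n c R θ) T)
    (hk : radialCount T < n) :
    2 ≤ boundaryCount T := by
  classical
  have hm : 0 < 2 * n - 1 := by omega
  obtain ⟨htree, hnc⟩ := hT
  have hconn := htree.connected
  let IsChord (d : ℕ) : Prop := ∃ b, T.Adj (cir n hm b) (cir n hm (b + d))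
  obtain ⟨d₀, hd₀, hchord₀⟩ : ∃ d ≤ n - 1, IsChord d := exists_short_chord hm hconn (by omega)
  set D := Nat.findGreatest IsChord (n - 1)
  obtain ⟨a, haD⟩ : IsChord D := Nat.findGreatest_spec hd₀ hchord₀
  have hD : 1 ≤ D := Nat.one_le_iff_ne_zero.2 fun h => T.ne_of_adj haD (by rw [h, add_zero])
  have hDn : D ≤ n - 1 := Nat.findGreatest_le _
  by_cases hdisj : ∃ b d, 1 ≤ d ∧ d ≤ n - 1 ∧ T.Adj (cir n hm b) (cir n hm (b + d)) ∧
      Disjoint (window hm b d) (window hm a D)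
  · obtain ⟨b, d, hd, hdn, hbd, hdisj⟩ := hdisj
    exact hnc.two_le_boundaryCount hm hconn hR hD hDn haD hd hdn hbd hdisj
  · push Not at hdisj
    have := sub_card_lt_radialCount hm hconn ⟨_, idx_mem_window hm (by omega : D < D + 1)⟩
      fun x y h => hnc.mem_window_of_adj hm hR hDn haD
        (fun b d hdn hbd => Nat.le_findGreatest hdn ⟨b, hbd⟩) hdisj h
    have := card_window_le hm a (D + 1)
    omega
end
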